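/- For any d-dimensional triangulation T of positive size, the treewidth of the coloured Hasse diagram satisfies tw(H(T)) ≤ (2^{d+1}−1)·(tw(D(T)) + 1), where D(T) is the dual graph of T. -/

import Mathlib

/-- A `d`-dimensional triangulation: `n` abstract `d`-simplices (with vertices
labelled `0, …, d`), some or all of whose facets are affinely identified in
pairs.  The facet `(s, a)` of the simplex `s` is the one opposite vertex `a`;
a gluing of facet `(s, a)` to facet `(q.1, q.2)` is recorded by a permutation
`σ` of the vertex labels with `σ a = q.2`, whose restriction away from `a`
describes the chosen bijection of the vertex sets of the two facets. -/
structure Triangulation (d : ℕ) where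
  n : ℕ
  glue : Fin n × Fin (d + 1) → Option ((Fin n × Fin (d + 1)) × Equiv.Perm (Fin (d + 1)))
  glue_ne : ∀ {p q σ}, glue p = some (q, σ) → q ≠ p
  glue_symm : ∀ {p q σ}, glue p = some (q, σ) → glue q = some (p, σ⁻¹)
  glue_vertex : ∀ {p q σ}, glue p = some (q, σ) → σ p.2 = q.2

namespace Triangulation

variable {d : ℕ}

/-- An ordered appearance of an `i`-face inside a simplex: a simplex together
with the injection sending the vertex labels `0, …, i` of the face to vertex
labels of the simplex. -/
def App (T : Triangulation d) (i : ℕ) : Type :=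
  Fin T.n × (Fin (i + 1) ↪ Fin (d + 1))

/-- Two ordered appearances of `i`-faces are directly identified when a facet
gluing carries one to the other. -/
def appStep (T : Triangulation d) (i : ℕ) : T.App i → T.App i → Prop := fun x y =>
  ∃ (a : Fin (d + 1)) (q : Fin T.n × Fin (d + 1)) (σ : Equiv.Perm (Fin (d + 1))),
    T.glue (x.1, a) = some (q, σ) ∧ (∀ j, x.2 j ≠ a) ∧
    y.1 = q.1 ∧ y.2 = x.2.trans σ.toEmbedding

/-- Ordered `i`-faces of the triangulation: equivalence classes of ordered
appearances under the identifications induced by the facet gluings. -/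
def OFace (T : Triangulation d) (i : ℕ) : Type := Quot (T.appStep i)

/-- Reordering the vertex labels of an ordered face by a permutation. -/
def reorder (T : Triangulation d) (i : ℕ) : T.OFace i → T.OFace i → Prop := fun f g =>
  ∃ (x : T.App i) (ρ : Equiv.Perm (Fin (i + 1))),
    f = Quot.mk _ x ∧ g = Quot.mk _ (x.1, ρ.toEmbedding.trans x.2)

/-- The `i`-faces of the triangulation: ordered `i`-faces up to reordering of
their vertex labels.  (For `i = d` these are just the simplices.) -/
def Face (T : Triangulation d) (i : ℕ) : Type := Quot (T.reorder i)

/-- The unordered face underlying an ordered face. -/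
def toFace (T : Triangulation d) {i : ℕ} (f : T.OFace i) : T.Face i :=
  Quot.mk _ f

/-- A labelling of the triangulation: an arbitrary choice, for every `i`-face,
of a labelling of its vertices by `0, …, i`, i.e. of a compatible ordered
face. -/
structure Labelling (T : Triangulation d) where
  lab : ∀ i : ℕ, T.Face i → T.OFace i
  lab_spec : ∀ (i : ℕ) (f : T.Face i), T.toFace (lab i f) = f

/-- The face `f` appears as a subface of the simplex `s`. -/
def FaceIn (T : Triangulation d) {i : ℕ} (f : T.Face i) (s : Fin T.n) : Prop :=
  ∃ φ : Fin (i + 1) ↪ Fin (d + 1), T.toFace (Quot.mk (T.appStep i) (s, φ)) = f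

/-- The subface relation `f ≤_{π_0…π_i} g` between an `i`-face `f` and an
`(i+1)`-face `g` of the triangulation, relative to the labelling `L`:
vertex `j` of `f` corresponds to vertex `π j` of `g`. -/
def SubRel (T : Triangulation d) (L : T.Labelling) {i : ℕ}
    (π : Fin (i + 1) ↪ Fin (i + 2)) (f : T.Face i) (g : T.Face (i + 1)) : Prop :=
  ∃ (s : Fin T.n) (ψ : Fin (i + 2) ↪ Fin (d + 1)),
    L.lab (i + 1) g = Quot.mk (T.appStep (i + 1)) (s, ψ) ∧
    L.lab i f = Quot.mk (T.appStep i) (s, π.trans ψ)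

/-- The subface relation `f ≤_{π_0…π_i} s` between an `i`-face `f` and a
`d`-face (simplex) `s`, where `π_0, …, π_i` are vertex labels of the simplex
itself. -/
def SubSimpRel (T : Triangulation d) (L : T.Labelling) {i : ℕ}
    (π : Fin (i + 1) ↪ Fin (d + 1)) (f : T.Face i) (s : T.Face d) : Prop :=
  ∃ sx : Fin T.n,
    (∃ ψ : Fin (d + 1) ↪ Fin (d + 1), L.lab d s = Quot.mk (T.appStep d) (sx, ψ)) ∧
    L.lab i f = Quot.mk (T.appStep i) (sx, π)

/-- Adjacency in the dual graph `D(T)`: some facet of `s` is glued to some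
facet of `s'` (this includes loops, when `s = s'`). -/
def dualAdj (T : Triangulation d) (s s' : Fin T.n) : Prop :=
  ∃ (a b : Fin (d + 1)) (σ : Equiv.Perm (Fin (d + 1))),
    T.glue (s, a) = some ((s', b), σ)

/-- The degree of a node of the dual graph `D(T)`: the number of glued facets
of the simplex `s`, so that a loop contributes two to the degree. -/
def dualDegree (T : Triangulation d) (s : Fin T.n) : ℕ :=
  (Finset.univ.filter fun a : Fin (d + 1) => (T.glue (s, a)).isSome).card

/-- Nodes of the coloured Hasse diagram `H(T)`: all faces of all dimensions,
together with the extra node `∅`. -/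
def HNode (T : Triangulation d) : Type := (Σ i : ℕ, T.Face i) ⊕ Unit

/-- Colours of the coloured Hasse diagram: the empty colour `−` together
with, for each level `i = 0, …, d−1`, all ordered sequences `π_0…π_i` of
distinct integers from `{0, …, i+1}`. -/
def HColour (d : ℕ) : Type :=
  Option (Σ i : Fin d, Fin ((i : ℕ) + 1) ↪ Fin ((i : ℕ) + 2))

/-- The (oriented) arc relation of the coloured Hasse diagram `H(T)`: an arc
of colour `π_0…π_i` from an `i`-face `f` to an `(i+1)`-face `g` whenever
`f ≤_{π_0…π_i} g`, and an arc of the empty colour from each vertex (0-face)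
to `∅`. -/
def hArcRel (T : Triangulation d) (L : T.Labelling) :
    HColour d → T.HNode → T.HNode → Prop
  | none, x, y => ∃ v : T.Face 0, x = Sum.inl ⟨0, v⟩ ∧ y = Sum.inr ()
  | some ⟨i, π⟩, x, y => ∃ (f : T.Face i) (g : T.Face ((i : ℕ) + 1)),
      T.SubRel L π f g ∧ x = Sum.inl ⟨(i : ℕ), f⟩ ∧ y = Sum.inl ⟨(i : ℕ) + 1, g⟩

/-- The arcs of the coloured Hasse diagram `H(T)`: a colour together with an
unordered pair of endpoints in the arc relation. -/
def HasseArc (T : Triangulation d) (L : T.Labelling) : Type :=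
  {a : HColour d × Sym2 T.HNode // ∃ x y : T.HNode, a.2 = s(x, y) ∧ T.hArcRel L a.1 x y}

/-- The (uncoloured) adjacency relation of the coloured Hasse diagram. -/
def hasseAdj (T : Triangulation d) (L : T.Labelling) (x y : T.HNode) : Prop :=
  ∃ c : HColour d, T.hArcRel L c x y ∨ T.hArcRel L c y x

end Triangulation

/-- A tree decomposition of a graph, presented by its node type `V` and an
adjacency relation `Adj` (this covers simple graphs, multigraphs and
edge-coloured graphs alike): a finite tree together with finite bags
satisfying the usual covering and connectivity conditions. -/
structure TreeDecomp {V : Type} (Adj : V → V → Prop) where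
  /-- index type of the tree nodes -/
  ι : Type
  [fin : Fintype ι]
  tree : SimpleGraph ι
  isTree : tree.IsTree
  bag : ι → Set V
  bag_finite : ∀ t, (bag t).Finite
  covers : ∀ v : V, ∃ t, v ∈ bag t
  covers_adj : ∀ v w : V, Adj v w → ∃ t, v ∈ bag t ∧ w ∈ bag t
  subtree : ∀ v : V, (tree.induce {t | v ∈ bag t}).Connected

/-- The width of a tree decomposition: `max_τ |B_τ| − 1`. -/
noncomputable def TreeDecomp.width {V : Type} {Adj : V → V → Prop}
    (D : TreeDecomp Adj) : ℕ :=
  letI := D.fin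
  (Finset.univ.sup fun t => (D.bag t).ncard) - 1

/-- The treewidth of a graph: the minimum width of a tree decomposition. -/
noncomputable def treewidth {V : Type} (Adj : V → V → Prop) : ℕ :=
  sInf {w | ∃ D : TreeDecomp Adj, D.width = w}

/-!
Take a tree decomposition of `D(T)` of minimal width and replace every bag `B` by the set of all
faces of the simplices in `B`, together with the node `∅`. Every arc of `H(T)` joins two faces of
a common simplex, or a vertex to `∅`. The simplices containing a given face `f` are connected in
`D(T)` through simplices containing `f`, since the gluings that identify the appearances of `f`
are arcs of `D(T)`; hence the nodes whose bags contain `f` still form a subtree. A simplex has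
`2^(d+1) − 1` faces, so a bag of size `k` becomes one of size at most `(2^(d+1) − 1) k + 1`.
-/

open Relation

namespace SimpleGraph

variable {ι β : Type*} {G : SimpleGraph ι}

theorem induce_connected_of_chain {P : β → Prop} {r : β → β → Prop} (f : β → Set ι)
    (hf : ∀ b, P b → (G.induce (f b)).Connected)
    (hr : ∀ a b, P a → P b → r a b → (f a ∩ f b).Nonempty)
    (hchain : ∀ a b, P a → P b → ReflTransGen (fun a b => P a ∧ P b ∧ r a b) a b)
    (hP : ∃ b, P b) :
    (G.induce {x | ∃ b, P b ∧ x ∈ f b}).Connected := by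
  set S := {x | ∃ b, P b ∧ x ∈ f b}
  have patch : ∀ b, P b → ∀ x y (hx : x ∈ S) (hy : y ∈ S), x ∈ f b → y ∈ f b →
      (G.induce S).Reachable ⟨x, hx⟩ ⟨y, hy⟩ := fun b hb x y _ _ hxb hyb =>
    ((hf b hb).preconnected ⟨x, hxb⟩ ⟨y, hyb⟩).map
      (induceHomOfLE G (show f b ⊆ S from fun z hz => ⟨b, hb, hz⟩)).toHom
  have along : ∀ a b, P a → ReflTransGen (fun a b => P a ∧ P b ∧ r a b) a b →
      ∀ x y (hx : x ∈ S) (hy : y ∈ S), x ∈ f a → y ∈ f b →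
        (G.induce S).Reachable ⟨x, hx⟩ ⟨y, hy⟩ := by
    intro a b ha hab
    induction hab with
    | refl => exact patch a ha
    | tail _ hcb ih =>
      obtain ⟨hc, hb, hcb⟩ := hcb
      obtain ⟨z, hzc, hzb⟩ := hr _ _ hc hb hcb
      exact fun x y hx hy hxa hyb =>
        (ih x z hx ⟨_, hc, hzc⟩ hxa hzc).trans (patch _ hb z y _ hy hzb hyb)
  obtain ⟨b, hb⟩ := hP
  obtain ⟨⟨x, hx⟩⟩ := (hf b hb).nonempty
  refine (connected_iff _).mpr ⟨?_, ⟨⟨x, b, hb, hx⟩⟩⟩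
  rintro ⟨x, hxS⟩ ⟨y, hyS⟩
  obtain ⟨a, ha, hxa⟩ := hxS
  obtain ⟨b, hb, hyb⟩ := hyS
  exact along a b ha (hchain a b ha hb) x y _ _ hxa hyb

end SimpleGraph

namespace TreeDecomp

variable {V W : Type} {Adj : V → V → Prop} {Adj' : W → W → Prop}

theorem ncard_bag_le_width_add_one (D : TreeDecomp Adj) (τ : D.ι) :
    (D.bag τ).ncard ≤ D.width + 1 := by
  let _ := D.fin
  have := Finset.le_sup (f := fun t => (D.bag t).ncard) (Finset.mem_univ τ)
  unfold width
  omega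

theorem width_le_of_ncard_bag_le (D : TreeDecomp Adj) {k : ℕ}
    (h : ∀ τ, (D.bag τ).ncard ≤ k + 1) : D.width ≤ k := by
  let _ := D.fin
  have : (Finset.univ.sup fun t => (D.bag t).ncard) ≤ k + 1 := Finset.sup_le fun τ _ => h τ
  unfold width
  omega

theorem treewidth_le_width (D : TreeDecomp Adj) : treewidth Adj ≤ D.width :=
  Nat.sInf_le ⟨D, rfl⟩

noncomputable def single [Finite V] (Adj : V → V → Prop) : TreeDecomp Adj where
  ι := Unit
  tree := ⊥
  isTree := .of_subsingleton
  bag _ := Set.univ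
  bag_finite _ := Set.finite_univ
  covers v := ⟨(), Set.mem_univ v⟩
  covers_adj v w _ := ⟨(), Set.mem_univ v, Set.mem_univ w⟩
  subtree v :=
    haveI : Nonempty {_t : Unit | v ∈ Set.univ} := ⟨⟨(), Set.mem_univ v⟩⟩
    .of_subsingleton

theorem exists_width_eq_treewidth [Finite V] (Adj : V → V → Prop) :
    ∃ D : TreeDecomp Adj, D.width = treewidth Adj :=
  Nat.sInf_mem (s := {w | ∃ D : TreeDecomp Adj, D.width = w}) ⟨_, single Adj, rfl⟩

def liftBag (D : TreeDecomp Adj) (R : W → V → Prop) (U : Set W) (τ : D.ι) : Set W :=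
  U ∪ ⋃ v ∈ D.bag τ, {w | R w v}

theorem mem_liftBag {D : TreeDecomp Adj} {R : W → V → Prop} {U : Set W} {τ : D.ι} {v : V}
    {w : W} (hv : v ∈ D.bag τ) (hw : R w v) : w ∈ D.liftBag R U τ :=
  .inr (Set.mem_biUnion hv hw)

theorem exists_mem_liftBag (D : TreeDecomp Adj) {R : W → V → Prop} {U : Set W} {w : W}
    (hw : w ∈ U ∨ ∃ v, R w v) : ∃ τ, w ∈ D.liftBag R U τ := by
  rcases hw with hw | ⟨v, hwv⟩
  · obtain ⟨τ⟩ := D.isTree.connected.nonempty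
    exact ⟨τ, .inl hw⟩
  · obtain ⟨τ, hτ⟩ := D.covers v
    exact ⟨τ, mem_liftBag hτ hwv⟩

theorem ncard_liftBag_le (D : TreeDecomp Adj) {R : W → V → Prop} {U : Set W} {k : ℕ}
    (hR : ∀ v, {w | R w v}.ncard ≤ k) (τ : D.ι) :
    (D.liftBag R U τ).ncard ≤ U.ncard + k * (D.bag τ).ncard := by
  have hB := D.bag_finite τ
  calc (D.liftBag R U τ).ncard ≤ U.ncard + (⋃ v ∈ D.bag τ, {w | R w v}).ncard :=
        Set.ncard_union_le _ _
    _ ≤ U.ncard + ∑ v ∈ hB.toFinset, {w | R w v}.ncard := by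
        gcongr
        simpa using hB.toFinset.set_ncard_biUnion_le fun v => {w | R w v}
    _ ≤ U.ncard + k * (D.bag τ).ncard := by
        gcongr
        rw [Set.ncard_eq_toFinset_card _ hB, mul_comm, ← smul_eq_mul]
        exact Finset.sum_le_card_nsmul _ _ _ fun v _ => hR v

def lift (D : TreeDecomp Adj) (R : W → V → Prop) (U : Set W) (hU : U.Finite)
    (hR : ∀ v, {w | R w v}.Finite)
    (hcover : ∀ w, w ∈ U ∨ ∃ v, R w v)
    (hadj : ∀ w w', Adj' w w' → w ∈ U ∨ w' ∈ U ∨ ∃ v, R w v ∧ R w' v)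
    (hconn : ∀ w v v', R w v → R w v' →
      ReflTransGen (fun a b => R w a ∧ R w b ∧ Adj a b) v v') :
    TreeDecomp Adj' where
  ι := D.ι
  fin := D.fin
  tree := D.tree
  isTree := D.isTree
  bag := D.liftBag R U
  bag_finite τ := hU.union ((D.bag_finite τ).biUnion fun v _ => hR v)
  covers w := D.exists_mem_liftBag (hcover w)
  covers_adj w w' h := by
    rcases hadj w w' h with hw | hw' | ⟨v, hwv, hw'v⟩
    · obtain ⟨τ, hτ⟩ := D.exists_mem_liftBag (hcover w')
      exact ⟨τ, .inl hw, hτ⟩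
    · obtain ⟨τ, hτ⟩ := D.exists_mem_liftBag (hcover w)
      exact ⟨τ, hτ, .inl hw'⟩
    · obtain ⟨τ, hτ⟩ := D.covers v
      exact ⟨τ, mem_liftBag hτ hwv, mem_liftBag hτ hw'v⟩
  subtree w := by
    by_cases hw : w ∈ U
    · have : {τ | w ∈ D.liftBag R U τ} = Set.univ := by simp [liftBag, hw]
      rw [this]
      exact (SimpleGraph.induceUnivIso _).connected_iff.mpr D.isTree.connected
    · have : {τ | w ∈ D.liftBag R U τ} = {τ | ∃ v, R w v ∧ τ ∈ {τ | v ∈ D.bag τ}} := by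
        ext τ
        simp [liftBag, hw, and_comm]
      rw [this]
      refine SimpleGraph.induce_connected_of_chain _ (fun v _ => D.subtree v) ?_ (hconn w)
        ((hcover w).resolve_left hw)
      intro v v' _ _ hvv'
      exact D.covers_adj v v' hvv'

end TreeDecomp

theorem treewidth_le_of_lift {V W : Type} [Finite V] {Adj : V → V → Prop}
    {Adj' : W → W → Prop} (R : W → V → Prop) (U : Set W) (hU : U.Finite)
    (hR : ∀ v, {w | R w v}.Finite) {k : ℕ} (hk : ∀ v, {w | R w v}.ncard ≤ k)
    (hcover : ∀ w, w ∈ U ∨ ∃ v, R w v)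
    (hadj : ∀ w w', Adj' w w' → w ∈ U ∨ w' ∈ U ∨ ∃ v, R w v ∧ R w' v)
    (hconn : ∀ w v v', R w v → R w v' →
      ReflTransGen (fun a b => R w a ∧ R w b ∧ Adj a b) v v') :
    treewidth Adj' ≤ U.ncard + k * (treewidth Adj + 1) - 1 := by
  obtain ⟨D, hD⟩ := TreeDecomp.exists_width_eq_treewidth Adj
  refine (D.lift R U hU hR hcover hadj hconn).treewidth_le_width.trans
    (TreeDecomp.width_le_of_ncard_bag_le _ fun τ => ?_)
  have hbag := D.ncard_liftBag_le (U := U) hk τ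
  have hmul := Nat.mul_le_mul_left k (hD ▸ D.ncard_bag_le_width_add_one τ)
  change (D.liftBag R U τ).ncard ≤ _
  omega

theorem Fintype.card_nonempty_finset (α : Type*) [Fintype α] :
    Fintype.card {A : Finset α // A.Nonempty} = 2 ^ Fintype.card α - 1 := by
  classical
  rw [Fintype.card_congr (Equiv.subtypeEquivRight fun A => Finset.nonempty_iff_ne_empty),
    Fintype.card_subtype_compl, Fintype.card_subtype_eq, Fintype.card_finset]

namespace Triangulation

variable {d : ℕ} {T : Triangulation d}

theorem dualAdj_symm {s s' : Fin T.n} (h : T.dualAdj s s') : T.dualAdj s' s := by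
  obtain ⟨a, b, σ, hg⟩ := h
  exact ⟨b, a, σ⁻¹, T.glue_symm hg⟩

theorem dualAdj_of_appStep {i : ℕ} {x y : T.App i} (h : T.appStep i x y) :
    T.dualAdj x.1 y.1 := by
  obtain ⟨a, q, σ, hg, -, hy, -⟩ := h
  exact ⟨a, q.2, σ, hy ▸ hg⟩

theorem toFace_mk_eq_of_appStep {i : ℕ} {x y : T.App i} (h : T.appStep i x y) :
    T.toFace (Quot.mk _ x) = T.toFace (Quot.mk _ y) :=
  congrArg T.toFace (Quot.sound h)

theorem toFace_mk_reorder {i : ℕ} (x : T.App i) (ρ : Equiv.Perm (Fin (i + 1))) :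
    T.toFace (Quot.mk _ (x.1, ρ.toEmbedding.trans x.2)) = T.toFace (Quot.mk _ x) :=
  (Quot.sound ⟨x, ρ, rfl, rfl⟩).symm

theorem iff_of_toFace_mk_eq {i : ℕ} (F : T.App i → Prop)
    (hstep : ∀ x y, T.appStep i x y → (F x ↔ F y))
    (hreorder : ∀ x (ρ : Equiv.Perm (Fin (i + 1))), F (x.1, ρ.toEmbedding.trans x.2) ↔ F x)
    {x y : T.App i} (h : T.toFace (Quot.mk _ x) = T.toFace (Quot.mk _ y)) : F x ↔ F y := by
  let F₁ : T.OFace i → Prop := Quot.lift F fun x y hxy => propext (hstep x y hxy)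
  let F₂ : T.Face i → Prop := Quot.lift F₁ fun _ _ ⟨x, ρ, hf, hg⟩ => by
    subst hf hg
    exact propext (hreorder x ρ).symm
  exact Iff.of_eq (congrArg F₂ h)

theorem reflTransGen_of_faceIn {i : ℕ} {f : T.Face i} {s s' : Fin T.n}
    (hs : T.FaceIn f s) (hs' : T.FaceIn f s') :
    ReflTransGen (fun a b => T.FaceIn f a ∧ T.FaceIn f b ∧ T.dualAdj a b) s s' := by
  obtain ⟨φ, hφ⟩ := hs
  obtain ⟨φ', hφ'⟩ := hs'
  let F : T.App i → Prop := fun x => T.toFace (Quot.mk _ x) = f →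
    ReflTransGen (fun a b => T.FaceIn f a ∧ T.FaceIn f b ∧ T.dualAdj a b) s x.1
  -- `F` holds at `(s, φ)` and is constant on the appearances of each face.
  refine (iff_of_toFace_mk_eq F ?_ ?_ (hφ.trans hφ'.symm)).mp (fun _ => .refl) hφ'
  · intro x y hxy
    simp only [F, toFace_mk_eq_of_appStep hxy]
    refine imp_congr_right fun hy => ⟨fun h => h.tail ?_, fun h => h.tail ?_⟩
    · exact ⟨⟨x.2, (toFace_mk_eq_of_appStep hxy).trans hy⟩, ⟨y.2, hy⟩, dualAdj_of_appStep hxy⟩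
    · exact ⟨⟨y.2, hy⟩, ⟨x.2, (toFace_mk_eq_of_appStep hxy).trans hy⟩,
        dualAdj_symm (dualAdj_of_appStep hxy)⟩
  · intro x ρ
    simp only [F, toFace_mk_reorder]

theorem toFace_mk_eq_of_range_eq {i : ℕ} (s : Fin T.n) {e₁ e₂ : Fin (i + 1) ↪ Fin (d + 1)}
    (h : Set.range e₁ = Set.range e₂) :
    T.toFace (Quot.mk _ (s, e₁)) = T.toFace (Quot.mk _ (s, e₂)) := by
  let ρ : Equiv.Perm (Fin (i + 1)) := (Equiv.ofInjective e₁ e₁.injective).trans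
    ((Equiv.setCongr h).trans (Equiv.ofInjective e₂ e₂.injective).symm)
  have hρ : ρ.toEmbedding.trans e₂ = e₁ := by
    ext j
    simp [ρ, Equiv.apply_ofInjective_symm e₂.injective]
  rw [← hρ]
  exact toFace_mk_reorder (s, e₂) ρ

noncomputable def enumEmb (A : Finset (Fin (d + 1))) (h : A.Nonempty) :
    Fin (A.card - 1 + 1) ↪ Fin (d + 1) :=
  (finCongr (Nat.succ_pred_eq_of_pos h.card_pos)).toEmbedding.trans
    (A.orderEmbOfFin rfl).toEmbedding

theorem range_enumEmb (A : Finset (Fin (d + 1))) (h : A.Nonempty) :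
    Set.range (enumEmb A h) = A := by
  change Set.range (A.orderEmbOfFin rfl ∘ finCongr _) = _
  rw [(finCongr _).surjective.range_comp, Finset.range_orderEmbOfFin]

noncomputable def faceNode (T : Triangulation d) (s : Fin T.n) (A : Finset (Fin (d + 1)))
    (h : A.Nonempty) : T.HNode :=
  .inl ⟨A.card - 1, T.toFace (Quot.mk _ (s, enumEmb A h))⟩

theorem faceNode_map {i : ℕ} (s : Fin T.n) (φ : Fin (i + 1) ↪ Fin (d + 1))
    (h : (Finset.univ.map φ).Nonempty) :
    T.faceNode s (Finset.univ.map φ) h = .inl ⟨i, T.toFace (Quot.mk _ (s, φ))⟩ := by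
  generalize hA : Finset.univ.map φ = A at h
  have hrange : Set.range φ = A := by simp [← hA]
  obtain rfl : i = A.card - 1 := by simp [← hA]
  exact congrArg (fun g => (.inl ⟨_, g⟩ : T.HNode))
    (toFace_mk_eq_of_range_eq s ((range_enumEmb A h).trans hrange.symm))

def NodeIn (T : Triangulation d) : T.HNode → Fin T.n → Prop
  | .inl ⟨_, f⟩, s => T.FaceIn f s
  | .inr _, _ => False

theorem setOf_nodeIn_subset_range (s : Fin T.n) :
    {x | T.NodeIn x s} ⊆
      Set.range fun A : {A : Finset (Fin (d + 1)) // A.Nonempty} => T.faceNode s A.1 A.2 := by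
  rintro (⟨i, f⟩ | _) hx
  · obtain ⟨φ, rfl⟩ := hx
    exact ⟨⟨_, Finset.univ_nonempty.map⟩, faceNode_map s φ _⟩
  · exact False.elim hx

theorem finite_setOf_nodeIn (s : Fin T.n) : {x | T.NodeIn x s}.Finite :=
  (Set.finite_range _).subset (setOf_nodeIn_subset_range s)

theorem ncard_setOf_nodeIn_le (s : Fin T.n) :
    {x | T.NodeIn x s}.ncard ≤ 2 ^ (d + 1) - 1 := by
  calc {x | T.NodeIn x s}.ncard
      ≤ (Set.range fun A : {A : Finset (Fin (d + 1)) // A.Nonempty} =>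
          T.faceNode s A.1 A.2).ncard :=
        Set.ncard_le_ncard (setOf_nodeIn_subset_range s) (Set.finite_range _)
    _ ≤ Nat.card {A : Finset (Fin (d + 1)) // A.Nonempty} := by
        rw [← Set.image_univ]
        exact (Set.ncard_image_le Set.finite_univ).trans (Set.ncard_univ _).le
    _ = 2 ^ (d + 1) - 1 := by
        rw [Nat.card_eq_fintype_card, Fintype.card_nonempty_finset, Fintype.card_fin]

theorem exists_nodeIn (x : T.HNode) : x = .inr () ∨ ∃ s, T.NodeIn x s := by
  rcases x with ⟨i, f⟩ | ⟨⟩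
  · obtain ⟨g, rfl⟩ := Quot.exists_rep f
    obtain ⟨⟨s, φ⟩, rfl⟩ := Quot.exists_rep g
    exact .inr ⟨s, φ, rfl⟩
  · exact .inl rfl

theorem exists_faceIn_of_subRel {L : T.Labelling} {i : ℕ} {π : Fin (i + 1) ↪ Fin (i + 2)}
    {f : T.Face i} {g : T.Face (i + 1)} (h : T.SubRel L π f g) :
    ∃ s, T.FaceIn f s ∧ T.FaceIn g s := by
  obtain ⟨s, ψ, hg, hf⟩ := h
  exact ⟨s, ⟨π.trans ψ, hf ▸ L.lab_spec i f⟩, ⟨ψ, hg ▸ L.lab_spec (i + 1) g⟩⟩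

theorem exists_nodeIn_of_hArcRel {L : T.Labelling} {c : HColour d} {x y : T.HNode}
    (h : T.hArcRel L c x y) : y = .inr () ∨ ∃ s, T.NodeIn x s ∧ T.NodeIn y s := by
  rcases c with _ | ⟨i, π⟩
  · obtain ⟨v, -, rfl⟩ := h
    exact .inl rfl
  · obtain ⟨f, g, hfg, rfl, rfl⟩ := h
    exact .inr (exists_faceIn_of_subRel hfg)

theorem exists_nodeIn_of_hasseAdj {L : T.Labelling} {x y : T.HNode} (h : T.hasseAdj L x y) :
    x = .inr () ∨ y = .inr () ∨ ∃ s, T.NodeIn x s ∧ T.NodeIn y s := by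
  obtain ⟨c, h | h⟩ := h
  · rcases exists_nodeIn_of_hArcRel h with hy | ⟨s, hx, hy⟩
    · exact .inr (.inl hy)
    · exact .inr (.inr ⟨s, hx, hy⟩)
  · rcases exists_nodeIn_of_hArcRel h with hx | ⟨s, hy, hx⟩
    · exact .inl hx
    · exact .inr (.inr ⟨s, hx, hy⟩)

theorem reflTransGen_of_nodeIn {x : T.HNode} {s s' : Fin T.n} (hs : T.NodeIn x s)
    (hs' : T.NodeIn x s') :
    ReflTransGen (fun a b => T.NodeIn x a ∧ T.NodeIn x b ∧ T.dualAdj a b) s s' := by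
  rcases x with ⟨i, f⟩ | _
  · exact reflTransGen_of_faceIn hs hs'
  · exact False.elim hs

end Triangulation

theorem hasse_treewidth_le_general {d : ℕ} (T : Triangulation d) (L : T.Labelling) :
    treewidth (T.hasseAdj L) ≤ (2 ^ (d + 1) - 1) * (treewidth T.dualAdj + 1) := by
  open Triangulation in
  have hlift := treewidth_le_of_lift (Adj' := T.hasseAdj L) T.NodeIn {.inr ()}
    (Set.finite_singleton _) finite_setOf_nodeIn ncard_setOf_nodeIn_le exists_nodeIn
    (fun _ _ => exists_nodeIn_of_hasseAdj) (fun _ _ _ => reflTransGen_of_nodeIn)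
  have hU : ({.inr ()} : Set T.HNode).ncard = 1 := Set.ncard_singleton _
  omega

/-- For any `d`-dimensional triangulation `T` of positive
size (with any labelling `L` of its faces), the treewidth of the coloured
Hasse diagram satisfies `tw(H(T)) ≤ (2^(d+1) − 1)·(tw(D(T)) + 1)`. -/
theorem hasse_treewidth_le {d : ℕ} (T : Triangulation d) (L : T.Labelling)
    (hn : 1 ≤ T.n) :
    treewidth (T.hasseAdj L) ≤ (2 ^ (d + 1) - 1) * (treewidth T.dualAdj + 1) :=
  hasse_treewidth_le_general T L
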